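/- Let K be an algebraically closed field and k ≥ 1. Suppose M = (V₁, V₂, α, β, η) and N = (W₁, W₂, γ, δ, θ) are finite-dimensional Γ_con-modules such that the only morphism of representations M → N is zero. Then M or N is filtered by a unique simple module; explicitly, at least one of the following holds: V₁ = 0, or V₂ = 0, or W₁ = 0, or W₂ = 0. -/

import Mathlib

/-- A finite-dimensional module over the contraction algebra `Γ_con` (the path algebra of
the quiver with two vertices, arrows `a : 1 → 2`, `b : 2 → 1` and a loop `y` at vertex `2`,
modulo `y^k = ba`, `ay = 0`, `yb = 0`), given concretely as a representation
`(V₁, V₂, α, β, η)` with `α ∘ β = η^k`, `η ∘ α = 0` and `β ∘ η = 0`. -/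
structure GamRep (K : Type) [Field K] (k : ℕ) : Type 1 where
  V1 : Type
  V2 : Type
  [acg1 : AddCommGroup V1]
  [acg2 : AddCommGroup V2]
  [mod1 : Module K V1]
  [mod2 : Module K V2]
  [fd1 : FiniteDimensional K V1]
  [fd2 : FiniteDimensional K V2]
  α : V1 →ₗ[K] V2
  β : V2 →ₗ[K] V1
  η : V2 →ₗ[K] V2
  rel1 : α ∘ₗ β = η ^ k
  rel2 : η ∘ₗ α = 0
  rel3 : β ∘ₗ η = 0

attribute [instance] GamRep.acg1 GamRep.acg2 GamRep.mod1 GamRep.mod2 GamRep.fd1 GamRep.fd2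

namespace GamRep

variable {K : Type} [Field K] {k : ℕ}

/-- A morphism of `Γ_con`-modules is a pair of linear maps commuting with the three
structure maps. -/
def IsHom (M N : GamRep K k) (φ1 : M.V1 →ₗ[K] N.V1) (φ2 : M.V2 →ₗ[K] N.V2) : Prop :=
  φ2 ∘ₗ M.α = N.α ∘ₗ φ1 ∧ φ1 ∘ₗ M.β = N.β ∘ₗ φ2 ∧ φ2 ∘ₗ M.η = N.η ∘ₗ φ2

/-- An isomorphism of `Γ_con`-modules is a pair of linear isomorphisms commuting with the
structure maps. -/
def Iso (M N : GamRep K k) : Prop :=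
  ∃ (φ1 : M.V1 ≃ₗ[K] N.V1) (φ2 : M.V2 ≃ₗ[K] N.V2),
    M.IsHom N (φ1 : M.V1 →ₗ[K] N.V1) (φ2 : M.V2 →ₗ[K] N.V2)

/-- The zero representation: both underlying vector spaces are trivial. -/
def IsZero (M : GamRep K k) : Prop := Subsingleton M.V1 ∧ Subsingleton M.V2

theorem prodMap_pow {V W : Type} [AddCommGroup V] [Module K V] [AddCommGroup W] [Module K W]
    (f : V →ₗ[K] V) (g : W →ₗ[K] W) (n : ℕ) :
    (f.prodMap g) ^ n = (f ^ n).prodMap (g ^ n) := by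
  induction n with
  | zero => ext <;> simp
  | succ n ih => rw [pow_succ, pow_succ, pow_succ, ih, LinearMap.prodMap_mul]

/-- The direct sum of two representations, taken componentwise. -/
def dsum (M N : GamRep K k) : GamRep K k where
  V1 := M.V1 × N.V1
  V2 := M.V2 × N.V2
  α := M.α.prodMap N.α
  β := M.β.prodMap N.β
  η := M.η.prodMap N.η
  rel1 := by
    rw [show (M.α.prodMap N.α) ∘ₗ (M.β.prodMap N.β) = (M.α ∘ₗ M.β).prodMap (N.α ∘ₗ N.β) from
      LinearMap.prodMap_comp _ _ _ _, M.rel1, N.rel1, prodMap_pow]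
  rel2 := by
    rw [show (M.η.prodMap N.η) ∘ₗ (M.α.prodMap N.α) = (M.η ∘ₗ M.α).prodMap (N.η ∘ₗ N.α) from
      LinearMap.prodMap_comp _ _ _ _, M.rel2, N.rel2, LinearMap.prodMap_zero]
  rel3 := by
    rw [show (M.β.prodMap N.β) ∘ₗ (M.η.prodMap N.η) = (M.β ∘ₗ M.η).prodMap (N.β ∘ₗ N.η) from
      LinearMap.prodMap_comp _ _ _ _, M.rel3, N.rel3, LinearMap.prodMap_zero]

/-- A representation is indecomposable if it is nonzero and not isomorphic to a direct sum
of two nonzero representations. -/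
def Indecomposable (M : GamRep K k) : Prop :=
  ¬ M.IsZero ∧ ∀ N P : GamRep K k, M.Iso (N.dsum P) → N.IsZero ∨ P.IsZero

/-- The endomorphism space of a representation, as a `K`-subspace of the product of the two
spaces of linear endomorphisms. -/
def endSpace (M : GamRep K k) :
    Submodule K ((M.V1 →ₗ[K] M.V1) × (M.V2 →ₗ[K] M.V2)) where
  carrier := {φ | M.IsHom M φ.1 φ.2}
  zero_mem' := by
    refine ⟨?_, ?_, ?_⟩ <;> simp [LinearMap.zero_comp, LinearMap.comp_zero]
  add_mem' := by
    rintro φ ψ ⟨h1, h2, h3⟩ ⟨h4, h5, h6⟩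
    refine ⟨?_, ?_, ?_⟩
    · simp only [Prod.fst_add, Prod.snd_add, LinearMap.add_comp, LinearMap.comp_add, h1, h4]
    · simp only [Prod.fst_add, Prod.snd_add, LinearMap.add_comp, LinearMap.comp_add, h2, h5]
    · simp only [Prod.fst_add, Prod.snd_add, LinearMap.add_comp, LinearMap.comp_add, h3, h6]
  smul_mem' := by
    rintro c φ ⟨h1, h2, h3⟩
    refine ⟨?_, ?_, ?_⟩
    · simp only [Prod.smul_fst, Prod.smul_snd, LinearMap.smul_comp, LinearMap.comp_smul, h1]
    · simp only [Prod.smul_fst, Prod.smul_snd, LinearMap.smul_comp, LinearMap.comp_smul, h2]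
    · simp only [Prod.smul_fst, Prod.smul_snd, LinearMap.smul_comp, LinearMap.comp_smul, h3]

variable (K)

/-- The simple module `S₁ = (K, 0)` with all structure maps zero (a representation whenever
`k ≥ 1`). -/
def S1 (hk : 1 ≤ k) : GamRep K k where
  V1 := K
  V2 := PUnit
  α := 0
  β := 0
  η := 0
  rel1 := by rw [LinearMap.zero_comp, zero_pow (Nat.one_le_iff_ne_zero.mp hk)]
  rel2 := by rw [LinearMap.comp_zero]
  rel3 := by rw [LinearMap.comp_zero]

/-- The simple module `S₂ = (0, K)` with all structure maps zero (a representation whenever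
`k ≥ 1`). -/
def S2 (hk : 1 ≤ k) : GamRep K k where
  V1 := PUnit
  V2 := K
  α := 0
  β := 0
  η := 0
  rel1 := by rw [LinearMap.zero_comp, zero_pow (Nat.one_le_iff_ne_zero.mp hk)]
  rel2 := by rw [LinearMap.comp_zero]
  rel3 := by rw [LinearMap.comp_zero]

/-- The module `M₁ = (K, K, α = id, β = 0, η = 0)` (a representation whenever `k ≥ 1`). -/
def M1 (hk : 1 ≤ k) : GamRep K k where
  V1 := K
  V2 := K
  α := LinearMap.id
  β := 0
  η := 0
  rel1 := by rw [LinearMap.comp_zero, zero_pow (Nat.one_le_iff_ne_zero.mp hk)]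
  rel2 := by rw [LinearMap.zero_comp]
  rel3 := by rw [LinearMap.comp_zero]

/-- The module `M₂ = (K, K, α = 0, β = id, η = 0)` (a representation whenever `k ≥ 1`). -/
def M2 (hk : 1 ≤ k) : GamRep K k where
  V1 := K
  V2 := K
  α := 0
  β := LinearMap.id
  η := 0
  rel1 := by rw [LinearMap.zero_comp, zero_pow (Nat.one_le_iff_ne_zero.mp hk)]
  rel2 := by rw [LinearMap.comp_zero]
  rel3 := by rw [LinearMap.comp_zero]

end GamRep

/-!
Suppose all four spaces are nonzero; we exhibit a nonzero morphism `M → N`. Since `η` is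
nilpotent, `im α + im η = V₂` forces `η = 0` and `α` onto, and `ker δ ∩ ker θ = 0` forces `θ = 0`
and `δ` injective. If neither happens, `M` has `S₂` as a quotient and `N` has `S₂` as a submodule.
Otherwise `M` maps onto `M₁` (resp. `N` contains `M₂`), and the square-zero endomorphism `δγ`
(resp. `βα`) supplies a nonzero morphism `M₁ → N` (resp. `M → M₂`).
-/

open LinearMap

namespace Module.End

variable {K V : Type} [Field K] [AddCommGroup V] [Module K V] {f : Module.End K V}

theorem eq_zero_of_isNilpotent_of_codisjoint_range_ker (hf : IsNilpotent f)
    (h : Codisjoint (range f) (ker f)) : f = 0 := by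
  have hmap : range f = (range f).map f :=
    calc range f = (range f ⊔ ker f).map f := by rw [h.eq_top, range_eq_map]
      _ = (range f).map f := by rw [Submodule.map_sup, le_ker_iff_map.mp le_rfl, sup_bot_eq]
  have hpow : ∀ n : ℕ, range f ≤ range (f ^ (n + 1)) := by
    intro n
    induction n with
    | zero => rw [pow_one]
    | succ n ih =>
      calc range f ≤ (range f).map f := hmap.le
        _ ≤ (range (f ^ (n + 1))).map f := Submodule.map_mono ih
        _ = range (f ^ (n + 2)) := by rw [iterate_succ' (n + 1), range_comp]
  obtain ⟨n, hn⟩ := hf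
  rw [← range_eq_bot, eq_bot_iff]
  simpa [pow_succ, hn] using hpow n

theorem eq_zero_of_isNilpotent_of_disjoint_range_ker (hf : IsNilpotent f)
    (h : Disjoint (range f) (ker f)) : f = 0 := by
  have hstep : ∀ m : ℕ, f ^ (m + 2) = 0 → f ^ (m + 1) = 0 := fun m hm => by
    ext x
    have hrange : (f ^ (m + 1)) x ∈ range f := by
      rw [iterate_succ']
      exact mem_range_self f _
    have hker : (f ^ (m + 1)) x ∈ ker f := by
      rw [mem_ker, ← mul_apply, ← pow_succ', hm, LinearMap.zero_apply]
    exact (Submodule.disjoint_def.mp h) _ hrange hker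
  have hdown : ∀ m : ℕ, f ^ (m + 1) = 0 → f = 0 := by
    intro m
    induction m with
    | zero => rw [pow_one]; exact id
    | succ m ih => exact fun hm => ih (hstep m hm)
  obtain ⟨n, hn⟩ := hf
  exact hdown n (pow_eq_zero_of_le n.le_succ hn)

variable [FiniteDimensional K V] [Nontrivial V]

theorem ker_ne_bot_of_isNilpotent (hf : IsNilpotent f) : ker f ≠ ⊥ :=
  fun h => hf.not_isUnit ((isUnit_iff_ker_eq_bot f).mpr h)

theorem range_ne_top_of_isNilpotent (hf : IsNilpotent f) : range f ≠ ⊤ :=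
  fun h => hf.not_isUnit ((isUnit_iff_range_eq_top f).mpr h)

end Module.End

namespace GamRep

variable {K : Type} [Field K] {k : ℕ} (M N : GamRep K k)

@[simp]
theorem alpha_beta_apply (u : M.V2) : M.α (M.β u) = (M.η ^ k) u :=
  LinearMap.congr_fun M.rel1 u

@[simp]
theorem eta_alpha_apply (v : M.V1) : M.η (M.α v) = 0 :=
  LinearMap.congr_fun M.rel2 v

@[simp]
theorem beta_eta_apply (u : M.V2) : M.β (M.η u) = 0 :=
  LinearMap.congr_fun M.rel3 u

theorem isNilpotent_eta : IsNilpotent M.η :=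
  ⟨k + 1, by ext u; rw [pow_succ', Module.End.mul_apply, ← alpha_beta_apply, eta_alpha_apply]; rfl⟩

theorem alpha_comp_beta_eq_zero (hk : k ≠ 0) (hη : M.η = 0) : M.α ∘ₗ M.β = 0 := by
  rw [M.rel1, hη, zero_pow hk]

theorem isNilpotent_beta_comp_alpha (hk : k ≠ 0) : IsNilpotent (M.β ∘ₗ M.α) := by
  obtain ⟨j, rfl⟩ := Nat.exists_eq_succ_of_ne_zero hk
  refine ⟨2, ?_⟩
  ext v
  simp [pow_succ']

/-- The vertex-2 components of the radical and of the socle of a module. -/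
def rad₂ : Submodule K M.V2 := range M.α ⊔ range M.η

def soc₂ : Submodule K M.V2 := ker M.β ⊓ ker M.η

theorem eta_eq_zero_of_rad₂_eq_top (h : M.rad₂ = ⊤) : M.η = 0 := by
  refine Module.End.eq_zero_of_isNilpotent_of_codisjoint_range_ker M.isNilpotent_eta ?_
  rw [codisjoint_iff, eq_top_iff, ← h, rad₂, sup_comm]
  refine sup_le_sup_left ?_ _
  rintro _ ⟨v, rfl⟩
  exact M.eta_alpha_apply v

theorem eta_eq_zero_of_soc₂_eq_bot (h : M.soc₂ = ⊥) : M.η = 0 := by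
  refine Module.End.eq_zero_of_isNilpotent_of_disjoint_range_ker M.isNilpotent_eta ?_
  rw [disjoint_iff, eq_bot_iff, ← h, soc₂]
  refine inf_le_inf_right _ ?_
  rintro _ ⟨u, rfl⟩
  exact M.beta_eta_apply u

def HasNonzeroHom : Prop :=
  ∃ φ₁ φ₂, M.IsHom N φ₁ φ₂ ∧ (φ₁ ≠ 0 ∨ φ₂ ≠ 0)

variable {M N}

theorem isHom_of_apply {φ₁ : M.V1 →ₗ[K] N.V1} {φ₂ : M.V2 →ₗ[K] N.V2}
    (hα : ∀ v, φ₂ (M.α v) = N.α (φ₁ v)) (hβ : ∀ u, φ₁ (M.β u) = N.β (φ₂ u))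
    (hη : ∀ u, φ₂ (M.η u) = N.η (φ₂ u)) : M.IsHom N φ₁ φ₂ :=
  ⟨LinearMap.ext hα, LinearMap.ext hβ, LinearMap.ext hη⟩

/-- The morphism factors through `S₂`. -/
theorem hasNonzeroHom_of_rad₂_ne_top_of_soc₂_ne_bot (hM : M.rad₂ ≠ ⊤) (hN : N.soc₂ ≠ ⊥) :
    M.HasNonzeroHom N := by
  obtain ⟨f, hf, hfrad⟩ := M.rad₂.exists_le_ker_of_lt_top hM.lt_top
  obtain ⟨x, ⟨hxβ, hxη⟩, hx⟩ := Submodule.exists_mem_ne_zero_of_ne_bot hN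
  have hfα (v : M.V1) : f (M.α v) = 0 :=
    hfrad (Submodule.mem_sup_left (mem_range_self _ v))
  have hfη (u : M.V2) : f (M.η u) = 0 :=
    hfrad (Submodule.mem_sup_right (mem_range_self _ u))
  refine ⟨0, f.smulRight x, isHom_of_apply ?_ ?_ ?_, Or.inr ?_⟩
  · simp [hfα]
  · simp [mem_ker.mp hxβ]
  · simp [hfη, mem_ker.mp hxη]
  · simp [hf, hx]

/-- The morphism factors through `M₁`. -/
theorem hasNonzeroHom_of_rad₂_eq_top (hk : k ≠ 0) [Nontrivial M.V2] [Nontrivial N.V1]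
    (hM : M.rad₂ = ⊤) : M.HasNonzeroHom N := by
  have hη := M.eta_eq_zero_of_rad₂_eq_top hM
  have hα : Function.Surjective M.α := by
    rw [← range_eq_top]; simpa [rad₂, hη] using hM
  obtain ⟨w, hw, hw0⟩ := Submodule.exists_mem_ne_zero_of_ne_bot
    (Module.End.ker_ne_bot_of_isNilpotent (N.isNilpotent_beta_comp_alpha hk))
  obtain ⟨g, hg⟩ := exists_ne (0 : Module.Dual K M.V2)
  have hαβ (u : M.V2) : M.α (M.β u) = 0 := LinearMap.congr_fun (M.alpha_comp_beta_eq_zero hk hη) u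
  refine ⟨(g ∘ₗ M.α).smulRight w, g.smulRight (N.α w), isHom_of_apply ?_ ?_ ?_, Or.inl ?_⟩
  · simp
  · have hβαw : N.β (N.α w) = 0 := hw
    simp [hαβ, hβαw]
  · simp [hη]
  · rw [Ne, smulRight_apply_eq_zero_iff, ← zero_comp M.α, cancel_right hα]
    tauto

/-- The morphism factors through `M₂`. -/
theorem hasNonzeroHom_of_soc₂_eq_bot (hk : k ≠ 0) [Nontrivial M.V1] [Nontrivial N.V2]
    (hN : N.soc₂ = ⊥) : M.HasNonzeroHom N := by
  have hη := N.eta_eq_zero_of_soc₂_eq_bot hN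
  have hβ : Function.Injective N.β := by
    rw [← ker_eq_bot]; simpa [soc₂, hη] using hN
  obtain ⟨f, hf, hfrange⟩ := (range (M.β ∘ₗ M.α)).exists_le_ker_of_lt_top
    (Module.End.range_ne_top_of_isNilpotent (M.isNilpotent_beta_comp_alpha hk)).lt_top
  obtain ⟨x, hx⟩ := exists_ne (0 : N.V2)
  have hfβα (v : M.V1) : f (M.β (M.α v)) = 0 := hfrange (mem_range_self _ v)
  have hαβ (u : N.V2) : N.α (N.β u) = 0 := LinearMap.congr_fun (N.alpha_comp_beta_eq_zero hk hη) u
  refine ⟨f.smulRight (N.β x), (f ∘ₗ M.β).smulRight x, isHom_of_apply ?_ ?_ ?_, Or.inl ?_⟩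
  · simp [hfβα, hαβ]
  · simp
  · simp [hη]
  · simp [hf, hβ.ne_iff' (map_zero N.β), hx]

end GamRep

open GamRep in
theorem orthogonal_gam_modules_general (K : Type) [Field K] (k : ℕ) (hk : 1 ≤ k)
    (M N : GamRep K k)
    (h : ∀ (φ1 : M.V1 →ₗ[K] N.V1) (φ2 : M.V2 →ₗ[K] N.V2),
        M.IsHom N φ1 φ2 → φ1 = 0 ∧ φ2 = 0) :
    Subsingleton M.V1 ∨ Subsingleton M.V2 ∨ Subsingleton N.V1 ∨ Subsingleton N.V2 := by
  by_contra! hall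
  obtain ⟨_, _, _, _⟩ := hall
  have hk₀ : k ≠ 0 := Nat.one_le_iff_ne_zero.mp hk
  suffices hom : M.HasNonzeroHom N by
    obtain ⟨φ₁, φ₂, hφ, hne⟩ := hom
    have := h φ₁ φ₂ hφ
    tauto
  by_cases hM : M.rad₂ = ⊤
  · exact hasNonzeroHom_of_rad₂_eq_top hk₀ hM
  by_cases hN : N.soc₂ = ⊥
  · exact hasNonzeroHom_of_soc₂_eq_bot hk₀ hN
  exact hasNonzeroHom_of_rad₂_ne_top_of_soc₂_ne_bot hM hN

/-- If the only morphism between two finite-dimensional `Γ_con`-modules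
`M = (V₁, V₂, α, β, η)` and `N = (W₁, W₂, γ, δ, θ)` is zero, then one of the two modules
is filtered by a unique simple module, i.e. at least one of `V₁`, `V₂`, `W₁`, `W₂` is
the zero vector space. -/
theorem orthogonal_gam_modules (K : Type) [Field K] [IsAlgClosed K] (k : ℕ) (hk : 1 ≤ k)
    (M N : GamRep K k)
    (h : ∀ (φ1 : M.V1 →ₗ[K] N.V1) (φ2 : M.V2 →ₗ[K] N.V2),
        M.IsHom N φ1 φ2 → φ1 = 0 ∧ φ2 = 0) :
    Subsingleton M.V1 ∨ Subsingleton M.V2 ∨ Subsingleton N.V1 ∨ Subsingleton N.V2 :=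
  orthogonal_gam_modules_general K k hk M N h
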